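/- arXiv:math/0311120 — 2 statements merged into one kernel-verified Lean document; each statement's English description precedes it below -/
import Mathlib

section
/- Let q be a prime power, n a positive integer with n | q - 1, F a finite field with q elements, a ∈ F such that X^n - a is irreducible over F, K = F[X]/(X^n - a), α ∈ K the image of X, b ∈ F nonzero, h = a^((q-1)/n), and g = α + b. Let e < q^n be a natural number with S_q(e) < n and base-q digits e_0, ..., e_{n-1}. If f ∈ F[X] is a polynomial of degree less than n such that f(α) = g^e in K, then f = ∏_{i=0}^{n-1} (h^i X + b)^{e_i} as polynomials in F[X]; in particular f splits completely into linear factors over F. -/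
/-!
Since `α ^ n = a` and `n ∣ q - 1`, we get `α ^ q = h * α`; as `x ↦ x ^ q` is an `F`-algebra
endomorphism of `K`, this gives `g ^ (q ^ i) = h ^ i * α + b`. Expanding `e` in base `q` therefore
writes `g ^ e` as `∏ i, (h ^ i * α + b) ^ e_i`, the value at `α` of a polynomial of degree at most
`S_q(e) < n`. Two polynomials of degree `< n` with the same value at `α` agree.
-/

open Polynomial

theorem Nat.ofDigits_eq_sum_range_getD (b : ℕ) {L : List ℕ} {n : ℕ} (hL : L.length ≤ n) :
    ofDigits b L = ∑ i ∈ Finset.range n, L.getD i 0 * b ^ i := by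
  induction L generalizing n with
  | nil => simp [ofDigits]
  | cons d L ih =>
    cases n with
    | zero => simp at hL
    | succ m =>
      rw [ofDigits_cons, Finset.sum_range_succ', ih (by simpa using hL), Finset.mul_sum]
      simp only [List.getD_cons_succ, List.getD_cons_zero, pow_zero, mul_one, pow_succ]
      rw [add_comm]
      congr 1
      exact Finset.sum_congr rfl fun i _ => by ring

theorem Nat.sum_range_getD_eq_sum {L : List ℕ} {n : ℕ} (hL : L.length ≤ n) :
    ∑ i ∈ Finset.range n, L.getD i 0 = L.sum := by
  simpa [ofDigits_one] using (ofDigits_eq_sum_range_getD 1 hL).symm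

theorem pow_succ_eq_of_pow_eq {M : Type*} [Monoid M] {x y : M} {n m : ℕ} (hx : x ^ n = y)
    (hnm : n ∣ m) : x ^ (m + 1) = y ^ (m / n) * x := by
  conv_lhs => rw [← Nat.mul_div_cancel' hnm]
  rw [pow_succ, pow_mul, hx]

theorem FiniteField.add_algebraMap_pow_card_pow {K R : Type*} [Field K] [Fintype K] [CommRing R]
    [Algebra K R] {x : R} {c : K} (hx : x ^ Fintype.card K = algebraMap K R c * x) (b : K)
    (i : ℕ) :
    (x + algebraMap K R b) ^ (Fintype.card K ^ i) =
      algebraMap K R (c ^ i) * x + algebraMap K R b := by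
  induction i with
  | zero => simp
  | succ i ih =>
    have frob := frobeniusAlgHom_apply K R (algebraMap K R (c ^ i) * x + algebraMap K R b)
    rw [map_add, map_mul, AlgHom.commutes, AlgHom.commutes, frobeniusAlgHom_apply, hx] at frob
    rw [pow_succ, pow_mul, ih, ← frob, ← mul_assoc, ← map_mul, pow_succ]

theorem Polynomial.natDegree_prod_linear_pow_le {R ι : Type*} [CommSemiring R] (s : Finset ι)
    (c d : ι → R) (k : ι → ℕ) :
    (∏ i ∈ s, (C (c i) * X + C (d i)) ^ k i).natDegree ≤ ∑ i ∈ s, k i :=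
  (natDegree_prod_le _ _).trans <| Finset.sum_le_sum fun _ _ =>
    natDegree_pow_le.trans <| (Nat.mul_le_mul_left _ natDegree_linear_le).trans_eq (mul_one _)

theorem AdjoinRoot.eq_of_aeval_root_eq {K : Type*} [Field K] {g f₁ f₂ : K[X]}
    (h₁ : f₁.degree < g.degree) (h₂ : f₂.degree < g.degree)
    (h : aeval (root g) f₁ = aeval (root g) f₂) : f₁ = f₂ := by
  rw [aeval_eq, aeval_eq, mk_eq_mk] at h
  exact sub_eq_zero.mp <|
    eq_zero_of_dvd_of_degree_lt h ((degree_sub_le f₁ f₂).trans_lt (max_lt h₁ h₂))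

theorem rep_eq_prod_linear_of_sum_digits_lt_general
    (q n : ℕ) (hn : 0 < n) (hdvd : n ∣ q - 1)
    (F : Type*) [Field F] [Fintype F] (hF : Fintype.card F = q)
    (a : F)
    (b : F) (h : F) (hh : h = a ^ ((q - 1) / n))
    (e : ℕ) (he : e < q ^ n) (hs : (Nat.digits q e).sum < n)
    (f : F[X]) (hdeg : f.degree < n)
    (hf : Polynomial.aeval (AdjoinRoot.root (X ^ n - C a : F[X])) f =
      (AdjoinRoot.root (X ^ n - C a : F[X]) + AdjoinRoot.of (X ^ n - C a : F[X]) b) ^ e) :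
    f = ∏ i ∈ Finset.range n, (C (h ^ i) * X + C b) ^ ((Nat.digits q e).getD i 0) ∧
      (f.map (RingHom.id F)).Splits := by
  set α := AdjoinRoot.root (X ^ n - C a)
  set P := ∏ i ∈ Finset.range n, (C (h ^ i) * X + C b) ^ ((Nat.digits q e).getD i 0)
  have hq : 1 < q := hF ▸ Fintype.one_lt_card
  have hlen := (Nat.digits_length_le_iff hq e).2 he
  have hαq : α ^ Fintype.card F = algebraMap F _ h * α := by
    rw [hF, hh, ← Nat.sub_add_cancel hq.le, pow_succ_eq_of_pow_eq (root_X_pow_sub_C_pow n a) hdvd,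
      Nat.sub_add_cancel hq.le, map_pow, AdjoinRoot.algebraMap_eq]
  have hP : aeval α P = (α + AdjoinRoot.of _ b) ^ e := by
    conv_rhs => rw [← Nat.ofDigits_digits q e, Nat.ofDigits_eq_sum_range_getD q hlen,
      ← Finset.prod_pow_eq_pow_sum, ← AdjoinRoot.algebraMap_eq]
    refine (map_prod _ _ _).trans (Finset.prod_congr rfl fun i _ => ?_)
    rw [pow_mul', ← hF, FiniteField.add_algebraMap_pow_card_pow hαq]
    simp
  have hPdeg : P.degree < n := by
    refine degree_le_natDegree.trans_lt (WithBot.coe_lt_coe.2 ?_)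
    exact (natDegree_prod_linear_pow_le _ _ _ _).trans_lt (Nat.sum_range_getD_eq_sum hlen ▸ hs)
  have hfP : f = P := by
    refine AdjoinRoot.eq_of_aeval_root_eq ?_ ?_ (hf.trans hP.symm) <;> rwa [degree_X_pow_sub_C hn]
  refine ⟨hfP, ?_⟩
  rw [hfP, Polynomial.map_id]
  exact Splits.prod fun _ _ => (Splits.of_degree_le_one degree_linear_le).pow _

/-- If `f ∈ F[X]` has degree `< n` and represents `g^e` in `K = F[X]/(X^n - a)`, where
`g = α + b` and `S_q(e) < n`, then `f = ∏ i < n, (h^i X + b)^(e_i)`; in particular `f`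
splits completely into linear factors over `F`. -/
theorem rep_eq_prod_linear_of_sum_digits_lt
    (q n : ℕ) (hq : IsPrimePow q) (hn : 0 < n) (hdvd : n ∣ q - 1)
    (F : Type*) [Field F] [Fintype F] (hF : Fintype.card F = q)
    (a : F) (hirr : Irreducible (X ^ n - C a : F[X]))
    (b : F) (hb : b ≠ 0) (h : F) (hh : h = a ^ ((q - 1) / n))
    (e : ℕ) (he : e < q ^ n) (hs : (Nat.digits q e).sum < n)
    (f : F[X]) (hdeg : f.degree < n)
    (hf : Polynomial.aeval (AdjoinRoot.root (X ^ n - C a : F[X])) f =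
      (AdjoinRoot.root (X ^ n - C a : F[X]) + AdjoinRoot.of (X ^ n - C a : F[X]) b) ^ e) :
    f = ∏ i ∈ Finset.range n, (C (h ^ i) * X + C b) ^ ((Nat.digits q e).getD i 0) ∧
      (f.map (RingHom.id F)).Splits :=
  rep_eq_prod_linear_of_sum_digits_lt_general q n hn hdvd F hF a b h hh e he hs f hdeg hf
end

section
/- Let q be a prime power, n ≥ 2 an integer with n | q - 1, F a finite field with q elements, a ∈ F such that X^n - a is irreducible over F, K = F[X]/(X^n - a), α ∈ K the image of X, b ∈ F nonzero, h = a^((q-1)/n), and g = α + b. Let e < q^n be a natural number with 100·S_q(e) < 132·n, with base-q digits e_0, ..., e_{n-1}, and let f ∈ F[X] be a polynomial of degree less than n with f(α) = g^e in K. Then there exists a polynomial t ∈ F[X] with 100·deg(t) < 32·n such that f + (X^n - a)·t = ∏_{i=0}^{n-1} (h^i X + b)^{e_i} in F[X]. -/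
/-!
The `q`-power map is an `F`-algebra endomorphism of `K`, and it sends `α` to `h α` because
`α ^ q = α * (α ^ n) ^ ((q - 1) / n)`. Hence `g ^ (q ^ i) = h ^ i α + b`, and writing
`e = ∑ e_i q ^ i` shows that `P = ∏ (h ^ i X + b) ^ e_i` also represents `g ^ e`. So `f` is the
remainder of `P` modulo the monic `X ^ n - a`, and the quotient `t` has degree
`deg P - n ≤ S_q(e) - n < 0.32 n`.
-/

open Polynomial

namespace Nat

theorem ofDigits_eq_sum_range_getD_s12 (b : ℕ) {L : List ℕ} {n : ℕ} (hL : L.length ≤ n) :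
    ofDigits b L = ∑ i ∈ Finset.range n, L.getD i 0 * b ^ i := by
  induction L generalizing n with
  | nil => simp
  | cons d L ih =>
    obtain ⟨m, rfl⟩ : ∃ m, n = m + 1 := Nat.exists_eq_add_one.mpr (by simp at hL; omega)
    rw [ofDigits_cons, Finset.sum_range_succ', ih (by simpa using hL), Finset.mul_sum]
    simp only [List.getD_cons_succ, List.getD_cons_zero, pow_succ', pow_zero, mul_one,
      mul_left_comm b, add_comm d]

theorem sum_eq_sum_range_getD {L : List ℕ} {n : ℕ} (hL : L.length ≤ n) :
    L.sum = ∑ i ∈ Finset.range n, L.getD i 0 := by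
  simpa [ofDigits_one] using ofDigits_eq_sum_range_getD_s12 1 hL

end Nat

section Frobenius

variable {F A : Type*} [Field F] [Fintype F] [CommRing A] [Algebra F A]

theorem pow_card_eq_of_pow_eq_algebraMap {n : ℕ} (hdvd : n ∣ Fintype.card F - 1) {α : A} {a : F}
    (hα : α ^ n = algebraMap F A a) :
    α ^ Fintype.card F = algebraMap F A (a ^ ((Fintype.card F - 1) / n)) * α := by
  conv_lhs => rw [← Nat.sub_add_cancel Fintype.card_pos, ← Nat.mul_div_cancel' hdvd]
  rw [pow_succ, pow_mul, hα, map_pow]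

theorem add_algebraMap_pow_card_pow {α : A} {c : F}
    (hα : α ^ Fintype.card F = algebraMap F A c * α) (b : F) (i : ℕ) :
    (α + algebraMap F A b) ^ Fintype.card F ^ i = algebraMap F A (c ^ i) * α + algebraMap F A b := by
  induction i with
  | zero => simp
  | succ i ih =>
    rw [pow_succ, pow_mul, ih, ← FiniteField.frobeniusAlgHom_apply, map_add, map_mul,
      AlgHom.commutes, AlgHom.commutes, FiniteField.frobeniusAlgHom_apply, hα, pow_succ, map_mul,
      mul_assoc]

theorem aeval_prod_linear_pow {α : A} {c : F} (hα : α ^ Fintype.card F = algebraMap F A c * α)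
    (b : F) (d : ℕ → ℕ) (n : ℕ) :
    aeval α (∏ i ∈ Finset.range n, (C (c ^ i) * X + C b) ^ d i) =
      (α + algebraMap F A b) ^ ∑ i ∈ Finset.range n, d i * Fintype.card F ^ i := by
  rw [map_prod, ← Finset.prod_pow_eq_pow_sum]
  refine Finset.prod_congr rfl fun i _ => ?_
  rw [pow_mul', add_algebraMap_pow_card_pow hα]
  simp

end Frobenius

namespace Polynomial

variable {R : Type*} [CommRing R]

theorem natDegree_prod_linear_pow_le_s12 {ι : Type*} (s : Finset ι) (c b : ι → R) (d : ι → ℕ) :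
    (∏ i ∈ s, (C (c i) * X + C (b i)) ^ d i).natDegree ≤ ∑ i ∈ s, d i :=
  (natDegree_prod_le _ _).trans <| Finset.sum_le_sum fun _ _ =>
    (natDegree_pow_le_of_le _ natDegree_linear_le).trans (mul_one _).le

theorem natDegree_eq_of_add_mul_eq {p f t P : R[X]} (hp : p.Monic) (hf : f.degree < p.degree)
    (h : f + p * t = P) : t.natDegree = P.natDegree - p.natDegree := by
  rw [← (div_modByMonic_unique t f hp ⟨h, hf⟩).1, natDegree_divByMonic _ hp]

end Polynomial

theorem exists_t_of_sum_digits_lt_general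
    (q n : ℕ) (hdvd : n ∣ q - 1)
    (F : Type*) [Field F] [Fintype F] (hF : Fintype.card F = q)
    (a : F)
    (b : F) (h : F) (hh : h = a ^ ((q - 1) / n))
    (e : ℕ) (he : e < q ^ n) (hs : 100 * (Nat.digits q e).sum < 132 * n)
    (f : F[X]) (hdeg : f.degree < n)
    (hf : Polynomial.aeval (AdjoinRoot.root (X ^ n - C a : F[X])) f =
      (AdjoinRoot.root (X ^ n - C a : F[X]) + AdjoinRoot.of (X ^ n - C a : F[X]) b) ^ e) :
    ∃ t : F[X], 100 * t.natDegree < 32 * n ∧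
      f + (X ^ n - C a) * t =
        ∏ i ∈ Finset.range n, (C (h ^ i) * X + C b) ^ ((Nat.digits q e).getD i 0) := by
  subst hF hh
  set P : F[X] := ∏ i ∈ Finset.range n,
    (C ((a ^ ((Fintype.card F - 1) / n)) ^ i) * X + C b) ^ ((Nat.digits (Fintype.card F) e).getD i 0)
  have hn : n ≠ 0 := by omega
  have hp : (X ^ n - C a).Monic := monic_X_pow_sub_C a hn
  have hlen : (Nat.digits (Fintype.card F) e).length ≤ n :=
    (Nat.digits_length_le_iff Fintype.one_lt_card e).mpr he
  have hroot : AdjoinRoot.root (X ^ n - C a) ^ n = algebraMap F _ a := by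
    have h0 := AdjoinRoot.eval₂_root (X ^ n - C a)
    rwa [eval₂_sub, eval₂_X_pow, eval₂_C, sub_eq_zero, ← AdjoinRoot.algebraMap_eq] at h0
  have hPf : aeval (AdjoinRoot.root (X ^ n - C a)) P = aeval (AdjoinRoot.root (X ^ n - C a)) f := by
    rw [hf, aeval_prod_linear_pow (pow_card_eq_of_pow_eq_algebraMap hdvd hroot),
      ← Nat.ofDigits_eq_sum_range_getD_s12 _ hlen, Nat.ofDigits_digits, AdjoinRoot.algebraMap_eq]
  obtain ⟨t, ht⟩ := AdjoinRoot.mk_eq_mk.mp (by simpa only [AdjoinRoot.aeval_eq] using hPf)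
  have hsum : f + (X ^ n - C a) * t = P := by rw [← ht]; ring
  refine ⟨t, ?_, hsum⟩
  have htdeg := natDegree_eq_of_add_mul_eq hp (by rwa [degree_X_pow_sub_C hn.bot_lt]) hsum
  have hPdeg : P.natDegree ≤ ∑ i ∈ Finset.range n, (Nat.digits (Fintype.card F) e).getD i 0 :=
    natDegree_prod_linear_pow_le_s12 _ _ (fun _ => b) _
  rw [Nat.sum_eq_sum_range_getD hlen] at hs
  rw [natDegree_X_pow_sub_C] at htdeg
  omega

/-- If `f` of degree `< n` represents `g^e` in `K = F[X]/(X^n - a)` with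
`S_q(e) < 1.32 n`, then there is `t` with `deg t < 0.32 n` such that
`f + (X^n - a) t = ∏ i < n, (h^i X + b)^(e_i)` in `F[X]`. -/
theorem exists_t_of_sum_digits_lt
    (q n : ℕ) (hq : IsPrimePow q) (hn : 2 ≤ n) (hdvd : n ∣ q - 1)
    (F : Type*) [Field F] [Fintype F] (hF : Fintype.card F = q)
    (a : F) (hirr : Irreducible (X ^ n - C a : F[X]))
    (b : F) (hb : b ≠ 0) (h : F) (hh : h = a ^ ((q - 1) / n))
    (e : ℕ) (he : e < q ^ n) (hs : 100 * (Nat.digits q e).sum < 132 * n)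
    (f : F[X]) (hdeg : f.degree < n)
    (hf : Polynomial.aeval (AdjoinRoot.root (X ^ n - C a : F[X])) f =
      (AdjoinRoot.root (X ^ n - C a : F[X]) + AdjoinRoot.of (X ^ n - C a : F[X]) b) ^ e) :
    ∃ t : F[X], 100 * t.natDegree < 32 * n ∧
      f + (X ^ n - C a) * t =
        ∏ i ∈ Finset.range n, (C (h ^ i) * X + C b) ^ ((Nat.digits q e).getD i 0) :=
  exists_t_of_sum_digits_lt_general q n hdvd F hF a b h hh e he hs f hdeg hf
end
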